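/- With notation as follows: for i = n,…,m, the functions μ_i on the open set of tuples (φ_1,…,φ_n) ∈ ((ℝ^m)^*)^n where the upper-left (n−1)×(n−1) minor μ is nonzero, defined as the determinant of the n×n matrix formed by rows 1,…,n−1,i of the columns φ_1,…,φ_n. Then at any point of the common zero set {μ_n = … = μ_m = 0}, the Jacobian minor ∂(μ_n,…,μ_m)/∂(φ_n^n,…,φ_n^m) equals μ^{m−n+1} ≠ 0; in particular the differentials dμ_n,…,dμ_m are linearly independent there. -/

import Mathlib

/-!
Each `μ_i` is linear in the last covector `φ_n`. Expanding along the last column, the coefficient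
of `φ_n^ℓ` (for `ℓ ≥ n`) is the cofactor of row `ℓ`: it is `μ` when `ℓ = i`, and `0` otherwise
because row `ℓ` does not occur in `μ_i`. So the Jacobian matrix is `μ • 1`, and evaluating the
differentials `dμ_i` on the directions `∂/∂φ_n^ℓ` gives an invertible matrix, which makes them
linearly independent.
-/

/-- The `(n-1) × (n-1)` upper-left minor `μ` of the tuple of covectors `φ`. -/
noncomputable def principalMinor (m n : ℕ) (hmn : n ≤ m) (φ : Fin n → Fin m → ℝ) : ℝ :=
  (Matrix.of fun i j : Fin (n - 1) =>
    φ (Fin.castLE (by omega) j) (Fin.castLE (by omega) i)).det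

/-- The `n × n` minor `μ_i` formed by rows `1, …, n-1, i` of the columns `φ_1, …, φ_n`. -/
noncomputable def muMinor (m n : ℕ) (hmn : n ≤ m) (i : Fin m) (φ : Fin n → Fin m → ℝ) : ℝ :=
  (Matrix.of fun (k j : Fin n) =>
    φ j (if h : (k : ℕ) < n - 1 then (⟨k, by omega⟩ : Fin m) else i)).det

open Matrix

section DetMinor

variable {κ ι : Type*} [Fintype κ] [DecidableEq κ] [Fintype ι]

theorem differentiable_det_minor (r : κ → ι) :
    Differentiable ℝ fun ψ : κ → ι → ℝ => (of fun k c => ψ c (r k)).det := by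
  simp only [det_apply', of_apply]
  fun_prop

theorem fderiv_det_minor_apply_single (r : κ → ι) (φ : κ → ι → ℝ) (j : κ) (w : ι → ℝ) :
    fderiv ℝ (fun ψ : κ → ι → ℝ => (of fun k c => ψ c (r k)).det) φ (Pi.single j w) =
      ((of fun k c => φ c (r k)).updateCol j (w ∘ r)).det := by
  set A : Matrix κ κ ℝ := of fun k c => φ c (r k)
  have hline : ∀ t : ℝ, (of fun k c => (φ + t • (Pi.single j w : κ → ι → ℝ)) c (r k)) =
      A.updateCol j ((fun k => A k j) + t • (w ∘ r)) := by
    intro t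
    ext k c
    rcases eq_or_ne c j with rfl | hc
    · simp [A]
    · simp [A, hc]
  rw [← (differentiable_det_minor r φ).lineDeriv_eq_fderiv, lineDeriv]
  simp only [hline, det_updateCol_add, det_updateCol_smul, updateCol_eq_self]
  simp

end DetMinor

theorem det_updateCol_last_single {R : Type*} [CommRing R] {k : ℕ}
    (A : Matrix (Fin (k + 1)) (Fin (k + 1)) R) :
    (A.updateCol (Fin.last k) (Pi.single (Fin.last k) 1)).det =
      (A.submatrix Fin.castSucc Fin.castSucc).det := by
  rw [det_succ_column _ (Fin.last k), Fintype.sum_eq_single (Fin.last k)]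
  · simp [Fin.succAbove_last, submatrix, ← two_mul, pow_mul]
  · intro i hi
    simp [updateCol_self, Pi.single_eq_of_ne hi]

theorem linearIndependent_of_isUnit_det {𝕜 M ι : Type*} [Field 𝕜] [AddCommGroup M]
    [Module 𝕜 M] [Fintype ι] [DecidableEq ι] (f : ι → M) (g : ι → M →ₗ[𝕜] 𝕜)
    (h : IsUnit (of fun i j => g j (f i)).det) : LinearIndependent 𝕜 f :=
  .of_comp (LinearMap.pi g) <|
    linearIndependent_rows_iff_isUnit.mpr ((isUnit_iff_isUnit_det _).mpr h)

theorem card_subtype_le_val {m k : ℕ} (hk : k ≤ m) :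
    Fintype.card {i : Fin m // k ≤ (i : ℕ)} = m - k := by
  simp only [← not_lt, Fintype.card_subtype]
  rw [Finset.filter_not, Finset.card_univ_sdiff, Fin.card_filter_val_lt, Fintype.card_fin,
    min_eq_right hk]

section Minors

variable {m n : ℕ}

def minorRow (hmn : n ≤ m) (i : Fin m) (k : Fin n) : Fin m :=
  if h : (k : ℕ) < n - 1 then ⟨k, by omega⟩ else i

theorem muMinor_eq_det (hmn : n ≤ m) (i : Fin m) :
    muMinor m n hmn i = fun ψ => (of fun k c => ψ c (minorRow hmn i k)).det :=
  rfl

theorem principalMinor_eq_det_submatrix {k : ℕ} (hmn : k + 1 ≤ m) (i : Fin m)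
    (φ : Fin (k + 1) → Fin m → ℝ) :
    principalMinor m (k + 1) hmn φ =
      ((of fun a c => φ c (minorRow hmn i a)).submatrix Fin.castSucc Fin.castSucc).det := by
  unfold principalMinor
  congr 1
  ext a b
  simp [minorRow]
  rfl

theorem pi_single_comp_minorRow {R : Type*} [Zero R] (hn : 1 ≤ n) (hmn : n ≤ m)
    (i l : Fin m) (hl : n - 1 ≤ (l : ℕ)) (a : R) :
    Pi.single l a ∘ minorRow hmn i = if i = l then Pi.single ⟨n - 1, by omega⟩ a else 0 := by
  ext k
  by_cases hk : (k : ℕ) < n - 1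
  · have hkl : (⟨k, by omega⟩ : Fin m) ≠ l := Fin.ne_of_val_ne (by simp only; omega)
    have hk' : k ≠ ⟨n - 1, by omega⟩ := Fin.ne_of_val_ne (by simp only; omega)
    split_ifs <;> simp [minorRow, hk, hkl, hk']
  · have hk' : k = ⟨n - 1, by omega⟩ := Fin.ext (by simp only; omega)
    split_ifs with hil <;> simp [minorRow, hk', hil]

theorem fderiv_muMinor_apply_single (hn : 1 ≤ n) (hmn : n ≤ m) (φ : Fin n → Fin m → ℝ)
    (i l : Fin m) (hl : n - 1 ≤ (l : ℕ)) :
    fderiv ℝ (muMinor m n hmn i) φ (Pi.single ⟨n - 1, by omega⟩ (Pi.single l 1)) =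
      if i = l then principalMinor m n hmn φ else 0 := by
  rw [muMinor_eq_det, fderiv_det_minor_apply_single, pi_single_comp_minorRow hn hmn i l hl]
  split_ifs
  · obtain ⟨k, rfl⟩ : ∃ k, n = k + 1 := ⟨n - 1, by omega⟩
    have hlast : (⟨k + 1 - 1, by omega⟩ : Fin (k + 1)) = Fin.last k := Fin.ext (by simp)
    rw [hlast, det_updateCol_last_single, principalMinor_eq_det_submatrix hmn i]
  · exact det_eq_zero_of_column_eq_zero ⟨n - 1, by omega⟩ fun k => by simp

end Minors

theorem stmt5 {m n : ℕ} (hn : 1 ≤ n) (hmn : n ≤ m)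
    (φ : Fin n → Fin m → ℝ)
    (hμ : principalMinor m n hmn φ ≠ 0)
    (J : Matrix {i : Fin m // n - 1 ≤ (i : ℕ)} {i : Fin m // n - 1 ≤ (i : ℕ)} ℝ)
    (hJ : J = Matrix.of fun i l =>
      fderiv ℝ (muMinor m n hmn i.1) φ
        (Pi.single (⟨n - 1, by omega⟩ : Fin n) (Pi.single l.1 (1 : ℝ)))) :
    J.det = principalMinor m n hmn φ ^ (m - n + 1) ∧ J.det ≠ 0 ∧
      LinearIndependent ℝ
        (fun i : {i : Fin m // n - 1 ≤ (i : ℕ)} => fderiv ℝ (muMinor m n hmn i.1) φ) := by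
  have hJ_diagonal : J = diagonal fun _ => principalMinor m n hmn φ := by
    ext i l
    rw [hJ, of_apply, fderiv_muMinor_apply_single hn hmn φ i l l.2, diagonal_apply]
    exact if_congr Subtype.ext_iff.symm rfl rfl
  have hdet : J.det = principalMinor m n hmn φ ^ (m - n + 1) := by
    rw [hJ_diagonal, det_diagonal, Finset.prod_const, Finset.card_univ,
      card_subtype_le_val (by omega), show m - (n - 1) = m - n + 1 by omega]
  have hdet_ne : J.det ≠ 0 := hdet ▸ pow_ne_zero _ hμ
  refine ⟨hdet, hdet_ne, linearIndependent_of_isUnit_det _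
    (fun l => (ContinuousLinearMap.apply ℝ ℝ
      (Pi.single (⟨n - 1, by omega⟩ : Fin n) (Pi.single l.1 (1 : ℝ)))).toLinearMap) ?_⟩
  exact hJ ▸ hdet_ne.isUnit
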